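/- Let L : E → ℝ be continuous, θ ∈ E and δ > 0. Then lim_{p→∞} δ · ‖L‖_p^{δ,θ} = sup_{t ∈ [−δ,δ], v ∈ φ(θ)} |L(θ + t·v) − L(θ)|, where the limit is taken along real exponents p → ∞. -/

import Mathlib

open MeasureTheory Filter Set

noncomputable section

/-- `E = E₁ × F` with the product (ℓ²) inner product, where
`E₁ = Π i : Fin N₁, EuclideanSpace ℝ (Fin (n i))`. -/
abbrev BNSpace {N₁ : ℕ} (n : Fin N₁ → ℕ) (F : Type*) [NormedAddCommGroup F] :=
  WithLp 2 ((PiLp 2 fun i => EuclideanSpace ℝ (Fin (n i))) × F)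

variable {N₁ : ℕ} {n : Fin N₁ → ℕ} {F : Type*} [NormedAddCommGroup F]
  [InnerProductSpace ℝ F] [FiniteDimensional ℝ F]

/-- `φ(θ)`: the set of `v = (v₁, …, v_{N₁}, v*)` with `‖vᵢ‖ = ‖θᵢ‖` for all `i`
and `‖v*‖ = 1`. -/
def phi (θ : BNSpace n F) : Set (BNSpace n F) :=
  {v | (∀ i, ‖v.ofLp.1 i‖ = ‖θ.ofLp.1 i‖) ∧ ‖v.ofLp.2‖ = 1}

/-- The δ-Lᵖ BN-sharpness
`‖L‖_p^{δ,θ} = sup_{v ∈ φ(θ)} δ^{-1/p} (∫_{-δ}^{δ} |(L(θ + t·v) − L(θ))/δ|^p dt)^{1/p}`. -/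
def bnSharpness (L : BNSpace n F → ℝ) (p δ : ℝ) (θ : BNSpace n F) : ℝ :=
  sSup ((fun v => δ ^ (-(1 / p)) *
    (∫ t in (-δ)..δ, |(L (θ + t • v) - L θ) / δ| ^ p) ^ (1 / p)) '' phi θ)

/-! The supremum `M` of `|g|` over the compact set `[a, b] × V` bounds every norm
`‖g(·, v)‖_{Lᵖ[a,b]}` by `(b - a)^{1/p} M`. Conversely, if `|g|` attains `M` at `(t₀, v₀)`
and `c < M`, then `|g(·, v₀)| > c` on an interval of some length `ℓ > 0` inside `[a, b]`, so the
supremum over `v` of these norms is at least `ℓ^{1/p} c`. Both bounds tend to `M` and `c` as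
`p → ∞`. After scaling by `δ`, the BN-sharpness is `δ^{-1/p}` times such a supremum with
`[a, b] = [-δ, δ]` and `V = φ(θ)`, which is compact. -/

open scoped Pointwise Topology

theorem mul_rpow_rpow_one_div {x c p : ℝ} (hx : 0 ≤ x) (hc : 0 ≤ c) (hp : p ≠ 0) :
    (x * c ^ p) ^ (1 / p) = x ^ (1 / p) * c := by
  rw [Real.mul_rpow hx (Real.rpow_nonneg hc _), ← Real.rpow_mul hc, mul_one_div_cancel hp,
    Real.rpow_one]

theorem tendsto_const_rpow_of_tendsto_zero {α : Type*} {l : Filter α} {e : α → ℝ} {b : ℝ}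
    (hb : b ≠ 0) (he : Tendsto e l (𝓝 0)) : Tendsto (fun x => b ^ e x) l (𝓝 1) := by
  have h := (Real.continuousAt_const_rpow hb).tendsto.comp he
  rwa [Real.rpow_zero] at h

theorem tendsto_const_rpow_one_div_atTop {b : ℝ} (hb : b ≠ 0) :
    Tendsto (fun p : ℝ => b ^ (1 / p)) atTop (𝓝 1) :=
  tendsto_const_rpow_of_tendsto_zero hb
    ((tendsto_inv_atTop_zero (𝕜 := ℝ)).congr fun p => (one_div p).symm)

theorem intervalIntegral_abs_rpow_nonneg (f : ℝ → ℝ) {a b : ℝ} (hab : a ≤ b) (p : ℝ) :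
    0 ≤ ∫ t in a..b, |f t| ^ p :=
  intervalIntegral.integral_nonneg hab fun _ _ => Real.rpow_nonneg (abs_nonneg _) _

def intervalLpNorm (f : ℝ → ℝ) (a b p : ℝ) : ℝ :=
  (∫ t in a..b, |f t| ^ p) ^ (1 / p)

theorem intervalLpNorm_nonneg (f : ℝ → ℝ) {a b : ℝ} (hab : a ≤ b) (p : ℝ) :
    0 ≤ intervalLpNorm f a b p :=
  Real.rpow_nonneg (intervalIntegral_abs_rpow_nonneg f hab p) _

theorem intervalLpNorm_div_const (f : ℝ → ℝ) {a b c p : ℝ} (hab : a ≤ b) (hc : 0 < c)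
    (hp : p ≠ 0) :
    intervalLpNorm (fun t => f t / c) a b p = intervalLpNorm f a b p / c := by
  simp only [intervalLpNorm, abs_div, abs_of_pos hc,
    Real.div_rpow (abs_nonneg _) hc.le, intervalIntegral.integral_div]
  rw [Real.div_rpow (intervalIntegral_abs_rpow_nonneg f hab p) (Real.rpow_nonneg hc.le _),
    ← Real.rpow_mul hc.le, mul_one_div_cancel hp, Real.rpow_one]

theorem intervalLpNorm_le {f : ℝ → ℝ} {a b M p : ℝ} (hab : a ≤ b) (hp : 0 < p)
    (hf : ∀ t ∈ Icc a b, |f t| ≤ M) :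
    intervalLpNorm f a b p ≤ (b - a) ^ (1 / p) * M := by
  have hM : 0 ≤ M := (abs_nonneg _).trans (hf a ⟨le_rfl, hab⟩)
  have hI : ∫ t in a..b, |f t| ^ p ≤ (b - a) * M ^ p := by
    calc ∫ t in a..b, |f t| ^ p ≤ ‖∫ t in a..b, |f t| ^ p‖ := Real.le_norm_self _
      _ ≤ M ^ p * |b - a| := by
        refine intervalIntegral.norm_integral_le_of_norm_le_const fun t ht => ?_
        rw [uIoc_of_le hab] at ht
        rw [Real.norm_of_nonneg (Real.rpow_nonneg (abs_nonneg _) _)]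
        exact Real.rpow_le_rpow (abs_nonneg _) (hf t (Ioc_subset_Icc_self ht)) hp.le
      _ = (b - a) * M ^ p := by rw [abs_of_nonneg (sub_nonneg.2 hab), mul_comm]
  rw [← mul_rpow_rpow_one_div (sub_nonneg.2 hab) hM hp.ne']
  exact Real.rpow_le_rpow (intervalIntegral_abs_rpow_nonneg f hab p) hI (one_div_nonneg.2 hp.le)

theorem mul_le_intervalLpNorm {f : ℝ → ℝ} {a b l u c p : ℝ} (hal : a ≤ l) (hlu : l ≤ u)
    (hub : u ≤ b) (hp : 0 < p) (hc : 0 ≤ c)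
    (hfi : IntervalIntegrable (fun t => |f t| ^ p) volume a b)
    (hf : ∀ t ∈ Ioo l u, c ≤ |f t|) :
    (u - l) ^ (1 / p) * c ≤ intervalLpNorm f a b p := by
  have hsub : uIcc l u ⊆ uIcc a b := by
    rw [uIcc_of_le hlu, uIcc_of_le (hal.trans (hlu.trans hub))]
    exact Icc_subset_Icc hal hub
  have hI : (u - l) * c ^ p ≤ ∫ t in a..b, |f t| ^ p :=
    calc (u - l) * c ^ p = ∫ _ in l..u, c ^ p := by simp
      _ ≤ ∫ t in l..u, |f t| ^ p :=
        intervalIntegral.integral_mono_on_of_le_Ioo hlu intervalIntegrable_const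
          (hfi.mono_set hsub) fun t ht => Real.rpow_le_rpow hc (hf t ht) hp.le
      _ ≤ ∫ t in a..b, |f t| ^ p :=
        intervalIntegral.integral_mono_interval hal hlu hub
          (Eventually.of_forall fun _ => Real.rpow_nonneg (abs_nonneg _) _) hfi
  rw [← mul_rpow_rpow_one_div (sub_nonneg.2 hlu) hc hp.ne']
  exact Real.rpow_le_rpow (mul_nonneg (sub_nonneg.2 hlu) (Real.rpow_nonneg hc p)) hI
    (one_div_nonneg.2 hp.le)

theorem exists_Ioo_subset_lt_of_lt {f : ℝ → ℝ} (hf : Continuous f) {a b t₀ c : ℝ}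
    (hab : a < b) (ht₀ : t₀ ∈ Icc a b) (hc : c < f t₀) :
    ∃ l u, a ≤ l ∧ l < u ∧ u ≤ b ∧ ∀ t ∈ Ioo l u, c < f t := by
  have hU : IsOpen {t | c < f t} := isOpen_lt continuous_const hf
  rw [← closure_Ioo hab.ne] at ht₀
  obtain ⟨l, u, hlu, hsub⟩ :=
    (hU.inter isOpen_Ioo).exists_Ioo_subset (mem_closure_iff.1 ht₀ _ hU hc)
  obtain ⟨hal, hub⟩ := (Ioo_subset_Ioo_iff hlu).1 (hsub.trans inter_subset_right)
  exact ⟨l, u, hal, hlu, hub, fun t ht => (hsub ht).1⟩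

section Family

variable {X : Type*} [TopologicalSpace X] {g : ℝ × X → ℝ} {V : Set X} {a b : ℝ}

theorem intervalLpNorm_le_mul_sSup (hg : Continuous g) (hV : IsCompact V) (hab : a ≤ b)
    {p : ℝ} (hp : 0 < p) {v : X} (hv : v ∈ V) :
    intervalLpNorm (fun t => g (t, v)) a b p ≤
      (b - a) ^ (1 / p) * sSup ((fun q => |g q|) '' (Icc a b ×ˢ V)) :=
  intervalLpNorm_le hab hp fun t ht =>
    le_csSup ((isCompact_Icc.prod hV).image (continuous_abs.comp hg)).bddAbove
      ⟨(t, v), ⟨ht, hv⟩, rfl⟩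

theorem sSup_intervalLpNorm_le (hg : Continuous g) (hV : IsCompact V) (hab : a ≤ b)
    {p : ℝ} (hp : 0 < p) :
    sSup ((fun v => intervalLpNorm (fun t => g (t, v)) a b p) '' V) ≤
      (b - a) ^ (1 / p) * sSup ((fun q => |g q|) '' (Icc a b ×ˢ V)) :=
  Real.sSup_le (forall_mem_image.2 fun _ hv => intervalLpNorm_le_mul_sSup hg hV hab hp hv)
    (mul_nonneg (Real.rpow_nonneg (sub_nonneg.2 hab) _)
      (Real.sSup_nonneg (forall_mem_image.2 fun _ _ => abs_nonneg _)))

theorem eventually_lt_sSup_intervalLpNorm (hg : Continuous g) (hV : IsCompact V) (hab : a < b)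
    {y : ℝ} (hy : y < sSup ((fun q => |g q|) '' (Icc a b ×ˢ V))) :
    ∀ᶠ p in atTop, y < sSup ((fun v => intervalLpNorm (fun t => g (t, v)) a b p) '' V) := by
  rcases lt_or_ge y 0 with hy0 | hy0
  · exact Eventually.of_forall fun p => hy0.trans_le (Real.sSup_nonneg
      (forall_mem_image.2 fun _ _ => intervalLpNorm_nonneg _ hab.le p))
  have hne : ((fun q => |g q|) '' (Icc a b ×ˢ V)).Nonempty := by
    by_contra h
    rw [not_nonempty_iff_eq_empty.1 h, Real.sSup_empty] at hy
    linarith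
  obtain ⟨⟨t₀, v₀⟩, ⟨ht₀, hv₀⟩, hmax⟩ :=
    ((isCompact_Icc.prod hV).image (continuous_abs.comp hg)).sSup_mem hne
  obtain ⟨c, hyc, hcM⟩ := exists_between hy
  obtain ⟨l, u, hal, hlu, hub, hc⟩ := exists_Ioo_subset_lt_of_lt (f := fun t => |g (t, v₀)|)
    (by fun_prop) hab ht₀ (hmax ▸ hcM)
  have hT : Tendsto (fun p : ℝ => (u - l) ^ (1 / p) * c) atTop (𝓝 c) := by
    simpa using (tendsto_const_rpow_one_div_atTop (sub_pos.2 hlu).ne').mul_const c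
  filter_upwards [hT.eventually_const_lt hyc, eventually_gt_atTop 0] with p hlt hp
  have hfi : IntervalIntegrable (fun t => |g (t, v₀)| ^ p) volume a b :=
    ((by fun_prop : Continuous fun t => |g (t, v₀)|).rpow_const
      fun _ => Or.inr hp.le).intervalIntegrable _ _
  calc y < (u - l) ^ (1 / p) * c := hlt
    _ ≤ intervalLpNorm (fun t => g (t, v₀)) a b p :=
      mul_le_intervalLpNorm hal hlu.le hub hp (by linarith) hfi fun t ht => (hc t ht).le
    _ ≤ _ := le_csSup
      ⟨_, forall_mem_image.2 fun _ hv => intervalLpNorm_le_mul_sSup hg hV hab.le hp hv⟩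
      (mem_image_of_mem _ hv₀)

theorem tendsto_sSup_intervalLpNorm (hg : Continuous g) (hV : IsCompact V) (hab : a < b) :
    Tendsto (fun p => sSup ((fun v => intervalLpNorm (fun t => g (t, v)) a b p) '' V)) atTop
      (𝓝 (sSup ((fun q => |g q|) '' (Icc a b ×ˢ V)))) := by
  refine tendsto_order.2 ⟨fun y hy => eventually_lt_sSup_intervalLpNorm hg hV hab hy,
    fun y hy => ?_⟩
  have hT := (tendsto_const_rpow_one_div_atTop (sub_pos.2 hab).ne').mul_const
    (sSup ((fun q => |g q|) '' (Icc a b ×ˢ V)))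
  rw [one_mul] at hT
  filter_upwards [hT.eventually_lt_const hy, eventually_gt_atTop 0] with p hlt hp
  exact (sSup_intervalLpNorm_le hg hV hab.le hp).trans_lt hlt

end Family

theorem isCompact_phi (θ : BNSpace n F) : IsCompact (phi θ) := by
  have hclosed : IsClosed (phi θ) := by
    simp only [phi, ofPred_and, ofPred_forall]
    exact (isClosed_iInter fun i => isClosed_eq (by fun_prop) continuous_const).inter
      (isClosed_eq (by fun_prop) continuous_const)
  refine (isCompact_closedBall 0 √(‖θ.ofLp.1‖ ^ 2 + 1)).of_isClosed_subset hclosed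
    fun v hv => ?_
  have hv₁ : ‖v.ofLp.1‖ = ‖θ.ofLp.1‖ := by
    simp only [PiLp.norm_eq_of_L2, hv.1]
  rw [mem_closedBall_zero_iff, WithLp.prod_norm_eq_of_L2]
  show √(‖v.ofLp.1‖ ^ 2 + ‖v.ofLp.2‖ ^ 2) ≤ _
  rw [hv₁, hv.2, one_pow]

omit [FiniteDimensional ℝ F] in
theorem mul_bnSharpness_eq (L : BNSpace n F → ℝ) (θ : BNSpace n F) {p δ : ℝ} (hδ : 0 < δ)
    (hp : 0 < p) :
    δ * bnSharpness L p δ θ = δ ^ (-(1 / p)) *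
      sSup ((fun v => intervalLpNorm (fun t => L (θ + t • v) - L θ) (-δ) δ p) '' phi θ) := by
  have hscale : bnSharpness L p δ θ = sSup ((δ ^ (-(1 / p)) / δ) •
      ((fun v => intervalLpNorm (fun t => L (θ + t • v) - L θ) (-δ) δ p) '' phi θ)) := by
    rw [← image_smul, image_image, bnSharpness]
    congr 1
    refine image_congr fun v _ => ?_
    show δ ^ (-(1 / p)) * intervalLpNorm (fun t => (L (θ + t • v) - L θ) / δ) (-δ) δ p = _
    rw [intervalLpNorm_div_const _ (neg_le_self hδ.le) hδ hp.ne', smul_eq_mul]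
    ring
  rw [hscale, Real.sSup_smul_of_nonneg (by positivity), smul_eq_mul]
  field_simp

/-- For continuous `L`, `δ · ‖L‖_p^{δ,θ}` tends, as the real exponent `p → ∞`, to
`sup_{t ∈ [−δ,δ], v ∈ φ(θ)} |L(θ + t·v) − L(θ)|`. -/
theorem bnSharpness_tendsto_atTop (L : BNSpace n F → ℝ) (hL : Continuous L)
    (θ : BNSpace n F) (δ : ℝ) (hδ : 0 < δ) :
    Tendsto (fun p : ℝ => δ * bnSharpness L p δ θ) atTop
      (nhds (sSup ((fun q : ℝ × BNSpace n F => |L (θ + q.1 • q.2) - L θ|) ''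
        (Set.Icc (-δ) δ ×ˢ phi θ)))) := by
  have hg : Continuous fun q : ℝ × BNSpace n F => L (θ + q.1 • q.2) - L θ := by fun_prop
  have hscale : Tendsto (fun p : ℝ => δ ^ (-(1 / p))) atTop (𝓝 1) :=
    tendsto_const_rpow_of_tendsto_zero hδ.ne'
      (by simpa only [one_div, neg_zero] using (tendsto_inv_atTop_zero (𝕜 := ℝ)).neg)
  have hlim := hscale.mul (tendsto_sSup_intervalLpNorm hg (isCompact_phi θ) (neg_lt_self hδ))
  rw [one_mul] at hlim
  refine hlim.congr' ?_
  filter_upwards [eventually_gt_atTop 0] with p hp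
  exact (mul_bnSharpness_eq L θ hδ hp).symm
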